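/- Let A be a symmetric positive semidefinite n×n real matrix with largest eigenvalue λₙ, let b ∈ ℝⁿ, Δ > 0, and f(x) = (1/2)xᵀAx − bᵀx. Suppose x* and μ* satisfy μ* > 0, (A + μ*I)x* = b, and ‖x*‖ = Δ (so x* is the global minimizer of f over the ball {x : ‖x‖ ≤ Δ}). For k ≥ 1, if x_k minimizes f over the set {x ∈ span{b, Ab, …, A^{k−1}b} : ‖x‖ ≤ Δ}, then f(x_k) − f(x*) ≤ 3(λₙ + μ*)Δ² / (2(k+1)²), and consequently f(x_k) − f(x*) ≤ 3(λₙΔ² + 2(f(0) − f(x*))) / (2(k+1)²). -/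

import Mathlib

/-!
Since `b = (A + μ) x*`, for every polynomial `s` with `s(0) = 1` and `deg s ≤ k` the point
`y = x* - s(A + μ) x*` lies in the `k`-th Krylov space, and with `z = s(A + μ) x*` we have
`f(y) - f(x*) = ½⟪z, A z⟫ + μ⟪x*, z⟫`. The spectrum of `A + μ` lies in `[μ, λₙ + μ]`, where a
rescaled Chebyshev polynomial `T_{k+1}` yields such an `s` with `0 ≤ s ≤ 1` and
`t s(t) ≤ (λₙ + μ)/(k+1)²`. Hence `‖y‖ ≤ ‖x*‖ = Δ`, and the two terms are at most
`½ (λₙ + μ)Δ²/(k+1)²` and `(λₙ + μ)Δ²/(k+1)²`. The second bound follows from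
`f(0) - f(x*) = ½⟪x*, A x*⟫ + μΔ² ≥ μΔ²`.
-/

open scoped RealInnerProductSpace

open Polynomial Set

lemma Real.abs_sin_nat_mul_le (m : ℕ) (x : ℝ) : |Real.sin (m * x)| ≤ m * |Real.sin x| := by
  induction m with
  | zero => simp
  | succ m ih =>
    rw [Nat.cast_succ, add_mul, one_mul, Real.sin_add]
    calc |Real.sin (m * x) * Real.cos x + Real.cos (m * x) * Real.sin x|
        ≤ |Real.sin (m * x)| * |Real.cos x| + |Real.cos (m * x)| * |Real.sin x| :=
          (abs_add_le _ _).trans_eq (by rw [abs_mul, abs_mul])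
      _ ≤ m * |Real.sin x| * 1 + 1 * |Real.sin x| := by
          gcongr
          · exact Real.abs_cos_le_one x
          · exact Real.abs_cos_le_one _
      _ = (m + 1) * |Real.sin x| := by ring

lemma Polynomial.Chebyshev.one_sub_eval_T_real_le (m : ℕ) {x : ℝ} (hx : x ∈ Icc (-1) 1) :
    1 - (T ℝ m).eval x ≤ m ^ 2 * (1 - x) := by
  -- with `x = cos θ`: `1 - cos (mθ) = 2 sin² (mθ/2) ≤ 2 m² sin² (θ/2) = m² (1 - cos θ)`
  obtain ⟨θ, -, rfl⟩ : ∃ θ ∈ Icc 0 Real.pi, Real.cos θ = x := Real.bijOn_cos.surjOn hx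
  have hsq : Real.sin (m * (θ / 2)) ^ 2 ≤ m ^ 2 * Real.sin (θ / 2) ^ 2 := by
    rw [← sq_abs, ← sq_abs (Real.sin _), ← mul_pow]
    gcongr
    exact Real.abs_sin_nat_mul_le m _
  have hmθ := Real.sin_sq_eq_half_sub (m * (θ / 2))
  have hθ := Real.sin_sq_eq_half_sub (θ / 2)
  rw [show 2 * (m * (θ / 2)) = m * θ by ring] at hmθ
  rw [show 2 * (θ / 2) = θ by ring] at hθ
  rw [T_real_cos]
  push_cast
  nlinarith

lemma X_sq_dvd_X_sub_T_comp {L : ℝ} (hL : L ≠ 0) {m : ℕ} (hm : m ≠ 0) :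
    X ^ 2 ∣ X - C (L / (2 * m ^ 2)) * (1 - (Chebyshev.T ℝ m).comp (1 - C (2 / L) * X)) := by
  -- the constant and linear coefficients vanish since `T_m(1) = 1` and `T_m'(1) = m²`
  rw [X_pow_dvd_iff]
  intro d hd
  interval_cases d
  · simp [coeff_zero_eq_eval_zero, eval_comp, Chebyshev.T_eval_one]
  · rw [← taylor_zero (X - _), taylor_coeff_one]
    have hcoef : L / (2 * m ^ 2) * (2 / L * m ^ 2) = 1 := by field_simp
    simp [derivative_comp, eval_comp, Chebyshev.derivative_T_eval_one, hcoef]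

lemma residual_bounds_of_mul_eq_one_sub_T {L t q : ℝ} {m : ℕ} (hm : m ≠ 0)
    (ht : t ∈ Ioc 0 L)
    (h : t * q = L / (2 * m ^ 2) * (1 - (Chebyshev.T ℝ m).eval (1 - 2 / L * t))) :
    0 ≤ q ∧ q ≤ 1 ∧ t * q ≤ L / m ^ 2 := by
  obtain ⟨ht0, htL⟩ := ht
  have hL : 0 < L := ht0.trans_le htL
  have hx : 1 - 2 / L * t ∈ Icc (-1) 1 := by
    rw [div_mul_eq_mul_div]
    constructor
    · rw [le_sub_comm, sub_neg_eq_add, div_le_iff₀ hL]; linarith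
    · have : 0 ≤ 2 * t / L := by positivity
      linarith
  obtain ⟨hT₁, hT₂⟩ := Chebyshev.eval_T_real_mem_Icc m hx
  have hT₃ := Chebyshev.one_sub_eval_T_real_le m hx
  have ha : 0 < L / (2 * m ^ 2) := by positivity
  have htq_le : t * q ≤ t := by
    calc t * q ≤ L / (2 * m ^ 2) * (m ^ 2 * (1 - (1 - 2 / L * t))) := by rw [h]; gcongr
      _ = t := by field_simp; ring
  have htq_nonneg : 0 ≤ t * q := by rw [h]; exact mul_nonneg ha.le (by linarith)
  refine ⟨(mul_nonneg_iff_of_pos_left ht0).1 htq_nonneg,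
    le_of_mul_le_mul_left (by linarith) ht0, ?_⟩
  calc t * q ≤ L / (2 * m ^ 2) * 2 := by rw [h]; gcongr; linarith
    _ = L / m ^ 2 := by field_simp

/-- The witness is `p = (X - c (1 - T_{k+1}(1 - 2X/L))) / X²` with `c = L / (2(k+1)²)`, so that
`t (1 - t p(t)) = c (1 - T_{k+1}(1 - 2t/L))`. -/
lemma exists_chebyshev_residual (k : ℕ) {L : ℝ} (hL : 0 < L) :
    ∃ p : ℝ[X], p.degree < k ∧ ∀ t ∈ Ioc 0 L,
      0 ≤ 1 - t * p.eval t ∧ 1 - t * p.eval t ≤ 1 ∧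
        t * (1 - t * p.eval t) ≤ L / (k + 1) ^ 2 := by
  obtain ⟨p, hp⟩ := X_sq_dvd_X_sub_T_comp hL.ne' k.succ_ne_zero
  refine ⟨p, ?_, fun t ht => ?_⟩
  · have hdeg : (X ^ 2 * p).natDegree ≤ k + 1 := by
      rw [← hp]
      have hs : (1 - C (2 / L) * X : ℝ[X]).natDegree ≤ 1 := by compute_degree
      refine (natDegree_sub_le _ _).trans <| max_le (natDegree_X_le.trans (by omega)) <|
        (natDegree_C_mul_le _ _).trans <| (natDegree_sub_le _ _).trans <|
          max_le (by simp) <| natDegree_comp_le.trans ?_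
      rw [Chebyshev.natDegree_T, Int.natAbs_natCast]
      simpa using Nat.mul_le_mul_left k.succ hs
    rcases eq_or_ne p 0 with rfl | hp0
    · simp
    rw [natDegree_mul (pow_ne_zero 2 X_ne_zero) hp0, natDegree_X_pow] at hdeg
    exact (natDegree_lt_iff_degree_lt hp0).1 (by omega)
  · have heval := congrArg (eval t) hp
    simp only [eval_sub, eval_mul, eval_C, eval_X, eval_one, eval_comp, eval_pow] at heval
    have := residual_bounds_of_mul_eq_one_sub_T k.succ_ne_zero ht (q := 1 - t * p.eval t)
      (by linear_combination heval)
    simpa using this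

def krylovSubspace {R M : Type*} [CommSemiring R] [AddCommMonoid M] [Module R M]
    (T : Module.End R M) (b : M) (k : ℕ) : Submodule R M :=
  Submodule.span R ((fun j => (T ^ j) b) '' Iio k)

lemma aeval_apply_mem_krylovSubspace {R M : Type*} [CommSemiring R] [AddCommMonoid M]
    [Module R M] (T : Module.End R M) (b : M) {k : ℕ} {r : R[X]} (hr : r.degree < k) :
    aeval T r b ∈ krylovSubspace T b k := by
  rcases eq_or_ne r 0 with rfl | hr0
  · simp
  rw [aeval_eq_sum_range' ((natDegree_lt_iff_degree_lt hr0).2 hr), LinearMap.sum_apply]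
  refine Submodule.sum_mem _ fun j hj => Submodule.smul_mem _ _ (Submodule.subset_span ?_)
  exact ⟨j, Finset.mem_range.1 hj, rfl⟩

section Symmetric

variable {E : Type*} [NormedAddCommGroup E] [InnerProductSpace ℝ E] {T : E →ₗ[ℝ] E}

lemma LinearMap.IsSymmetric.isSymmetric_aeval (hT : T.IsSymmetric) (r : ℝ[X]) :
    (Polynomial.aeval T r).IsSymmetric := by
  induction r using Polynomial.induction_on' with
  | add p q hp hq => simpa only [map_add] using hp.add hq
  | monomial n a =>
    rw [aeval_monomial, Algebra.algebraMap_eq_smul_one, smul_mul_assoc, one_mul]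
    exact (hT.pow n).smul (by simp)

lemma LinearMap.IsSymmetric.inner_aeval_apply_aeval_apply (hT : T.IsSymmetric) (p q : ℝ[X])
    (x : E) : ⟪aeval T p x, aeval T q x⟫ = ⟪x, aeval T (p * q) x⟫ := by
  rw [hT.isSymmetric_aeval p, aeval_mul, Module.End.mul_apply]

noncomputable def quadraticObjective (T : E →ₗ[ℝ] E) (b x : E) : ℝ :=
  1 / 2 * ⟪x, T x⟫ - ⟪b, x⟫

lemma quadraticObjective_sub_eq (hT : T.IsSymmetric) {μ : ℝ} {x₀ b : E}
    (hb : T x₀ + μ • x₀ = b) (z : E) :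
    quadraticObjective T b (x₀ - z) - quadraticObjective T b x₀
      = 1 / 2 * ⟪z, T z⟫ + μ * ⟪x₀, z⟫ := by
  subst hb
  have h₁ : ⟪T x₀, z⟫ = ⟪x₀, T z⟫ := hT x₀ z
  have h₂ : ⟪z, T x₀⟫ = ⟪x₀, T z⟫ := by rw [real_inner_comm, hT]
  simp only [quadraticObjective, map_sub, inner_sub_left, inner_sub_right, inner_add_left,
    real_inner_smul_left]
  linear_combination h₁ - 1 / 2 * h₂

variable [FiniteDimensional ℝ E]

lemma LinearMap.IsSymmetric.inner_aeval_apply_le (hT : T.IsSymmetric) {a b c : ℝ}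
    (ha : ∀ x, a * ‖x‖ ^ 2 ≤ ⟪x, T x⟫) (hb : ∀ x, ⟪x, T x⟫ ≤ b * ‖x‖ ^ 2)
    {r : ℝ[X]} (hr : ∀ t ∈ Icc a b, r.eval t ≤ c) (x : E) :
    ⟪x, aeval T r x⟫ ≤ c * ‖x‖ ^ 2 := by
  set V := hT.eigenvectorBasis rfl
  set α := hT.eigenvalues rfl
  have hα : ∀ i, α i ∈ Icc a b := by
    intro i
    have hVi : ⟪V i, T (V i)⟫ = α i := by
      rw [hT.apply_eigenvectorBasis, real_inner_smul_right, real_inner_self_eq_norm_sq,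
        V.orthonormal.1 i, one_pow, mul_one]
      rfl
    exact ⟨by simpa [hVi, V.orthonormal.1 i] using ha (V i),
      by simpa [hVi, V.orthonormal.1 i] using hb (V i)⟩
  have hcoord : ∀ i, ⟪V i, aeval T r x⟫ = r.eval (α i) * ⟪V i, x⟫ := by
    intro i
    rw [← hT.isSymmetric_aeval r,
      Module.End.aeval_apply_of_hasEigenvector (hT.hasEigenvector_eigenvectorBasis rfl i),
      real_inner_smul_left]
    rfl
  calc ⟪x, aeval T r x⟫ = ∑ i, r.eval (α i) * ⟪V i, x⟫ ^ 2 := by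
        rw [← V.sum_inner_mul_inner]
        refine Finset.sum_congr rfl fun i _ => ?_
        rw [hcoord, real_inner_comm]; ring
    _ ≤ ∑ i, c * ⟪V i, x⟫ ^ 2 := by
        gcongr with i
        exact hr _ (hα i)
    _ = c * ‖x‖ ^ 2 := by
        rw [← Finset.mul_sum, ← V.sum_sq_norm_inner_right]
        simp

variable {lam : ℝ} (hpos : ∀ x, 0 ≤ ⟪x, T x⟫)
  (hlam : ∀ x, ⟪x, T x⟫ ≤ lam * ‖x‖ ^ 2)
include hpos hlam

-- `aeval T (taylor μ s)` is `s(T + μ)`, and the spectrum of `T + μ` lies in `[μ, lam + μ]`.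

lemma norm_sub_aeval_taylor_le (hT : T.IsSymmetric) {μ : ℝ} {s : ℝ[X]}
    (hs : ∀ t ∈ Icc μ (lam + μ), 0 ≤ s.eval t ∧ s.eval t ≤ 1) (x₀ : E) :
    ‖x₀ - aeval T (taylor μ s) x₀‖ ≤ ‖x₀‖ := by
  have hsub : x₀ - aeval T (taylor μ s) x₀ = aeval T (1 - taylor μ s) x₀ := by simp
  have hsq : ‖x₀ - aeval T (taylor μ s) x₀‖ ^ 2 ≤ 1 * ‖x₀‖ ^ 2 := by
    rw [hsub, ← real_inner_self_eq_norm_sq, hT.inner_aeval_apply_aeval_apply]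
    refine hT.inner_aeval_apply_le (a := 0) (by simpa using hpos) hlam (fun t ht => ?_) x₀
    obtain ⟨h₀, h₁⟩ := hs (t + μ) ⟨by linarith [ht.1], by linarith [ht.2]⟩
    simp only [eval_mul, eval_sub, eval_one, taylor_eval]
    nlinarith
  rw [one_mul] at hsq
  exact pow_le_pow_iff_left₀ (norm_nonneg _) (norm_nonneg _) two_ne_zero |>.1 hsq

lemma quadraticObjective_sub_aeval_taylor_le (hT : T.IsSymmetric) {μ M : ℝ} (hμ : 0 ≤ μ)
    {x₀ b : E} (hb : T x₀ + μ • x₀ = b) {s : ℝ[X]}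
    (hs : ∀ t ∈ Icc μ (lam + μ), 0 ≤ s.eval t ∧ s.eval t ≤ 1 ∧ t * s.eval t ≤ M) :
    quadraticObjective T b (x₀ - aeval T (taylor μ s) x₀) - quadraticObjective T b x₀
      ≤ 3 / 2 * M * ‖x₀‖ ^ 2 := by
  have hs' : ∀ t ∈ Icc 0 lam, 0 ≤ (taylor μ s).eval t ∧ (taylor μ s).eval t ≤ 1 ∧
      (t + μ) * (taylor μ s).eval t ≤ M := fun t ht => by
    simpa only [taylor_eval] using hs (t + μ) ⟨by linarith [ht.1], by linarith [ht.2]⟩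
  set z := aeval T (taylor μ s) x₀
  have hquad : ⟪z, T z⟫ ≤ M * ‖x₀‖ ^ 2 := by
    have hTz : T z = aeval T (X * taylor μ s) x₀ := by simp [z, aeval_mul]
    rw [hTz, hT.inner_aeval_apply_aeval_apply]
    refine hT.inner_aeval_apply_le (a := 0) (by simpa using hpos) hlam (fun t ht => ?_) x₀
    obtain ⟨h₀, h₁, h₂⟩ := hs' t ht
    simp only [eval_mul, eval_X]
    nlinarith [mul_le_mul_of_nonneg_left h₁ (mul_nonneg ht.1 h₀), mul_nonneg hμ h₀]
  have hlin : μ * ⟪x₀, z⟫ ≤ M * ‖x₀‖ ^ 2 := by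
    have hμz : μ * ⟪x₀, z⟫ = ⟪x₀, aeval T (C μ * taylor μ s) x₀⟫ := by
      simp [z, aeval_mul, real_inner_smul_right]
    rw [hμz]
    refine hT.inner_aeval_apply_le (a := 0) (by simpa using hpos) hlam (fun t ht => ?_) x₀
    obtain ⟨h₀, h₁, h₂⟩ := hs' t ht
    simp only [eval_mul, eval_C]
    nlinarith [ht.1]
  rw [quadraticObjective_sub_eq hT hb]
  linarith

lemma exists_mem_krylovSubspace_quadraticObjective_sub_le (hT : T.IsSymmetric) {μ : ℝ}
    (hμ : 0 < μ) (hlam₀ : 0 ≤ lam) {x₀ b : E} (hb : T x₀ + μ • x₀ = b) (k : ℕ) :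
    ∃ y ∈ krylovSubspace T b k, ‖y‖ ≤ ‖x₀‖ ∧
      quadraticObjective T b y - quadraticObjective T b x₀
        ≤ 3 * (lam + μ) * ‖x₀‖ ^ 2 / (2 * (k + 1) ^ 2) := by
  obtain ⟨p, hpdeg, hp⟩ := exists_chebyshev_residual k (add_pos_of_nonneg_of_pos hlam₀ hμ)
  have hs : ∀ t ∈ Icc μ (lam + μ), 0 ≤ (1 - X * p).eval t ∧ (1 - X * p).eval t ≤ 1 ∧
      t * (1 - X * p).eval t ≤ (lam + μ) / (k + 1) ^ 2 := fun t ht => by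
    simpa using hp t ⟨hμ.trans_le ht.1, ht.2⟩
  have hy : x₀ - aeval T (taylor μ (1 - X * p)) x₀ = aeval T (taylor μ p) b := by
    have hB : T x₀ + μ • x₀ = aeval T (taylor μ X) x₀ := by
      simp [taylor_X, Algebra.algebraMap_eq_smul_one]
    have hshift : taylor μ (1 - X * p) = 1 - taylor μ p * taylor μ X := by
      rw [map_sub, taylor_one, map_one, taylor_mul, mul_comm]
    rw [hshift, map_sub, map_one, LinearMap.sub_apply, Module.End.one_apply, sub_sub_cancel,
      aeval_mul, Module.End.mul_apply, ← hB, hb]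
  refine ⟨_, hy ▸ aeval_apply_mem_krylovSubspace T b (by rwa [degree_taylor]),
    norm_sub_aeval_taylor_le hpos hlam hT (fun t ht => (hs t ht).imp_right And.left) x₀, ?_⟩
  convert quadraticObjective_sub_aeval_taylor_le hpos hlam hT hμ.le hb hs using 1
  field_simp

end Symmetric

lemma Matrix.toEuclideanLin_pow {n : Type*} [Fintype n] [DecidableEq n] (A : Matrix n n ℝ)
    (j : ℕ) :
    toEuclideanLin (A ^ j) = toEuclideanLin A ^ j := by
  rw [← coe_toEuclideanCLM_eq_toEuclideanLin, map_pow, ContinuousLinearMap.toLinearMap_pow,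
    coe_toEuclideanCLM_eq_toEuclideanLin]

lemma Matrix.toEuclideanLin_add_smul_one_apply {n : Type*} [Fintype n] [DecidableEq n]
    (A : Matrix n n ℝ) (μ : ℝ) (x : EuclideanSpace ℝ n) :
    toEuclideanLin (A + μ • 1) x = toEuclideanLin A x + μ • x := by
  rw [← coe_toEuclideanCLM_eq_toEuclideanLin, map_add, map_smul, map_one]
  rfl

theorem trust_region_lanczos_sublinear_rate_general {n : ℕ}
    (A : Matrix (Fin n) (Fin n) ℝ) (hA : A.PosSemidef)
    (b : EuclideanSpace ℝ (Fin n)) (Δ : ℝ) (hΔ : 0 < Δ)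
    (f : EuclideanSpace ℝ (Fin n) → ℝ)
    (hf : ∀ x, f x = (1 / 2) * ⟪x, Matrix.toEuclideanLin A x⟫ - ⟪b, x⟫)
    -- `λₙ` is the largest eigenvalue of `A`
    (lamn : ℝ)
    (hlamnub : ∀ x : EuclideanSpace ℝ (Fin n),
      ⟪x, Matrix.toEuclideanLin A x⟫ ≤ lamn * ‖x‖ ^ 2)
    -- the optimizer on the boundary with positive multiplier `μ*`
    (xstar : EuclideanSpace ℝ (Fin n)) (μ : ℝ) (hμ : 0 < μ)
    (hKKT : Matrix.toEuclideanLin (A + μ • 1) xstar = b)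
    (hxstar : ‖xstar‖ = Δ)
    (k : ℕ)
    (xk : EuclideanSpace ℝ (Fin n))
    (hmin : ∀ x ∈ Submodule.span ℝ
        ((fun j : ℕ => Matrix.toEuclideanLin (A ^ j) b) '' Set.Iio k),
      ‖x‖ ≤ Δ → f xk ≤ f x) :
    f xk - f xstar ≤ 3 * (lamn + μ) * Δ ^ 2 / (2 * ((k : ℝ) + 1) ^ 2) ∧
    f xk - f xstar
      ≤ 3 * (lamn * Δ ^ 2 + 2 * (f 0 - f xstar)) / (2 * ((k : ℝ) + 1) ^ 2) := by
  set T := Matrix.toEuclideanLin A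
  obtain ⟨hT, hpos⟩ := Matrix.isPositive_toEuclideanLin_iff.2 hA
  replace hpos : ∀ x, 0 ≤ ⟪x, T x⟫ := fun x => real_inner_comm x (T x) ▸ hpos x
  have hb : T xstar + μ • xstar = b := by
    rw [← hKKT, Matrix.toEuclideanLin_add_smul_one_apply]
  have hlam₀ : 0 ≤ lamn := by
    have hx : 0 < ‖xstar‖ ^ 2 := by rw [hxstar]; positivity
    nlinarith [hpos xstar, hlamnub xstar]
  obtain rfl : f = quadraticObjective T b := funext hf
  obtain ⟨y, hyK, hynorm, hy⟩ :=
    exists_mem_krylovSubspace_quadraticObjective_sub_le hpos hlamnub hT hμ hlam₀ hb k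
  have hK : krylovSubspace T b k
      = Submodule.span ℝ ((fun j : ℕ => Matrix.toEuclideanLin (A ^ j) b) '' Set.Iio k) := by
    simp only [krylovSubspace, Matrix.toEuclideanLin_pow, T]
  have hxk := hmin y (hK ▸ hyK) (hxstar ▸ hynorm)
  rw [hxstar] at hy
  have hfirst : quadraticObjective T b xk - quadraticObjective T b xstar
      ≤ 3 * (lamn + μ) * Δ ^ 2 / (2 * ((k : ℝ) + 1) ^ 2) := by linarith
  refine ⟨hfirst, hfirst.trans ?_⟩
  have h0 := quadraticObjective_sub_eq hT hb xstar
  rw [sub_self, real_inner_self_eq_norm_sq, hxstar] at h0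
  gcongr ?_ / _
  nlinarith [hpos xstar]

/-- sublinear `O(1/k²)` convergence rate of the trust-region
Lanczos method for a positive semidefinite quadratic, via Chebyshev
polynomial analysis. -/
theorem trust_region_lanczos_sublinear_rate {n : ℕ}
    (A : Matrix (Fin n) (Fin n) ℝ) (hA : A.PosSemidef)
    (b : EuclideanSpace ℝ (Fin n)) (Δ : ℝ) (hΔ : 0 < Δ)
    (f : EuclideanSpace ℝ (Fin n) → ℝ)
    (hf : ∀ x, f x = (1 / 2) * ⟪x, Matrix.toEuclideanLin A x⟫ - ⟪b, x⟫)
    -- `λₙ` is the largest eigenvalue of `A`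
    (lamn : ℝ) (hlamneig : ∃ v : EuclideanSpace ℝ (Fin n), v ≠ 0 ∧
      Matrix.toEuclideanLin A v = lamn • v)
    (hlamnub : ∀ x : EuclideanSpace ℝ (Fin n),
      ⟪x, Matrix.toEuclideanLin A x⟫ ≤ lamn * ‖x‖ ^ 2)
    -- the optimizer on the boundary with positive multiplier `μ*`
    (xstar : EuclideanSpace ℝ (Fin n)) (μ : ℝ) (hμ : 0 < μ)
    (hKKT : Matrix.toEuclideanLin (A + μ • 1) xstar = b)
    (hxstar : ‖xstar‖ = Δ)
    (k : ℕ) (hk : 1 ≤ k)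
    (xk : EuclideanSpace ℝ (Fin n))
    (hmem : xk ∈ Submodule.span ℝ
      ((fun j : ℕ => Matrix.toEuclideanLin (A ^ j) b) '' Set.Iio k))
    (hfeas : ‖xk‖ ≤ Δ)
    (hmin : ∀ x ∈ Submodule.span ℝ
        ((fun j : ℕ => Matrix.toEuclideanLin (A ^ j) b) '' Set.Iio k),
      ‖x‖ ≤ Δ → f xk ≤ f x) :
    f xk - f xstar ≤ 3 * (lamn + μ) * Δ ^ 2 / (2 * ((k : ℝ) + 1) ^ 2) ∧
    f xk - f xstar
      ≤ 3 * (lamn * Δ ^ 2 + 2 * (f 0 - f xstar)) / (2 * ((k : ℝ) + 1) ^ 2) :=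
  trust_region_lanczos_sublinear_rate_general A hA b Δ hΔ f hf lamn hlamnub xstar μ hμ hKKT hxstar k
    xk hmin
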